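/- The group G = ⟨a, b, c ∣ a² = b² = c² = (abc)² = 1⟩ has a normal subgroup isomorphic to ℤ² (freely generated by the commuting elements ab and bc) with quotient ℤ/2ℤ; that is, G is isomorphic to a semidirect product ℤ² ⋊ ℤ/2ℤ where the ℤ/2ℤ-action is by negation. -/

import Mathlib

open FreeGroup

/-- Relators of the group `⟨a, b, c ∣ a² = b² = c² = (abc)² = 1⟩`. -/
def P6rels : Set (FreeGroup (Fin 3)) :=
  {(of 0) ^ 2, (of 1) ^ 2, (of 2) ^ 2, (of 0 * of 1 * of 2) ^ 2}

/-- The group `G = ⟨a, b, c ∣ a² = b² = c² = (abc)² = 1⟩`. -/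
abbrev P6G := PresentedGroup P6rels

/-- The parity homomorphism `G → ℤ/2ℤ` sending each generator to `1`. -/
def parity : P6G →* Multiplicative (ZMod 2) :=
  PresentedGroup.toGroup (f := fun _ => Multiplicative.ofAdd (1 : ZMod 2)) (by
    intro r hr
    rcases hr with rfl | rfl | rfl | rfl <;>
      simp [map_pow, map_mul] <;> decide)


/-- The negation automorphism `v ↦ -v` of `ℤ²`, written multiplicatively. -/
def negAut : MulAut (Multiplicative (ℤ × ℤ)) := MulEquiv.inv (Multiplicative (ℤ × ℤ))

/-- The action of `ℤ/2ℤ` on `ℤ²` in which the nontrivial element acts by negation. -/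
def negAction : Multiplicative (ZMod 2) →* MulAut (Multiplicative (ℤ × ℤ)) where
  toFun x := if x = 1 then 1 else negAut
  map_one' := if_pos rfl
  map_mul' x y := by
    have hsq : negAut * negAut = 1 := by
      ext v <;> simp [negAut]
    have hcases : ∀ z : Multiplicative (ZMod 2),
        z = 1 ∨ z = Multiplicative.ofAdd (1 : ZMod 2) := by decide
    rcases hcases x with hx | hx <;> rcases hcases y with hy | hy <;>
      subst hx <;> subst hy <;>
      simp [hsq, (by decide : Multiplicative.ofAdd (1 : ZMod 2) * Multiplicative.ofAdd 1 = 1),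
        (by decide : (Multiplicative.ofAdd (1 : ZMod 2)) ≠ 1)]


/-!
Writing `τ` for the generator of `ℤ/2ℤ`, the assignment `a ↦ (0, τ)`, `b ↦ ((-1, 0), τ)`,
`c ↦ ((-1, -1), τ)` respects the relations, because every element `(n, τ)` of `ℤ² ⋊ ℤ/2ℤ` is an
involution. Conversely, in `G` the relation `abc = cba` makes `ab` and `bc` commute and be inverted
by conjugation with `a`, so `(n, τ^k) ↦ (ab)^n₁ (bc)^n₂ a^k` is a homomorphism, inverse to the
first one. Under this isomorphism the parity map becomes the projection onto `ℤ/2ℤ`, whose kernel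
is `ℤ²`, i.e. the subgroup generated by `ab` and `bc`.
-/

open SemidirectProduct

abbrev NegSemidirect :=
  SemidirectProduct (Multiplicative (ℤ × ℤ)) (Multiplicative (ZMod 2)) negAction

local notation "τ" => Multiplicative.ofAdd (1 : ZMod 2)

theorem Multiplicative.zmod_two_eq_one_or (z : Multiplicative (ZMod 2)) : z = 1 ∨ z = τ := by
  revert z; decide

theorem Multiplicative.zmod_two_ofAdd_one_mul_self : τ * τ = 1 := by decide

theorem negAction_ofAdd_one_apply (v : Multiplicative (ℤ × ℤ)) : negAction τ v = v⁻¹ := by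
  simp [negAction, negAut]

namespace NegSemidirect

theorem mk_ofAdd_one_mul_self (n : Multiplicative (ℤ × ℤ)) :
    (⟨n, τ⟩ : NegSemidirect) * ⟨n, τ⟩ = 1 := by
  refine SemidirectProduct.ext ?_ Multiplicative.zmod_two_ofAdd_one_mul_self
  exact (congrArg (n * ·) (negAction_ofAdd_one_apply n)).trans (mul_inv_cancel n)

section Lift

variable {H : Type*} [Group H]

def zpowPairHom (u w : H) (huw : Commute u w) : Multiplicative (ℤ × ℤ) →* H where
  toFun n := u ^ n.toAdd.1 * w ^ n.toAdd.2
  map_one' := by simp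
  map_mul' m n := by
    simp only [toAdd_mul, Prod.fst_add, Prod.snd_add, zpow_add]
    exact (huw.zpow_zpow _ _).mul_mul_mul_comm _ _

theorem zpowPairHom_apply (u w : H) (huw : Commute u w) (n : Multiplicative (ℤ × ℤ)) :
    zpowPairHom u w huw n = u ^ n.toAdd.1 * w ^ n.toAdd.2 := rfl

theorem zpowPairHom_mem_closure (u w : H) (huw : Commute u w) (n : Multiplicative (ℤ × ℤ)) :
    zpowPairHom u w huw n ∈ Subgroup.closure {u, w} :=
  mul_mem (zpow_mem (Subgroup.subset_closure (.inl rfl)) _)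
    (zpow_mem (Subgroup.subset_closure (.inr rfl)) _)

def involutionHom (x : H) (hx : x * x = 1) : Multiplicative (ZMod 2) →* H where
  toFun z := if z = 1 then 1 else x
  map_one' := if_pos rfl
  map_mul' y z := by
    rcases Multiplicative.zmod_two_eq_one_or y with rfl | rfl <;>
      rcases Multiplicative.zmod_two_eq_one_or z with rfl | rfl <;>
      simp [Multiplicative.zmod_two_ofAdd_one_mul_self, hx]

theorem involutionHom_ofAdd_one (x : H) (hx : x * x = 1) : involutionHom x hx τ = x := by
  simp [involutionHom]

def lift (x u w : H) (hx : x * x = 1) (huw : Commute u w)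
    (hu : x * u * x⁻¹ = u⁻¹) (hw : x * w * x⁻¹ = w⁻¹) : NegSemidirect →* H :=
  SemidirectProduct.lift (zpowPairHom u w huw) (involutionHom x hx) fun z => by
    rcases Multiplicative.zmod_two_eq_one_or z with rfl | rfl
    · ext n; simp
    · refine MonoidHom.ext fun n => ?_
      simp only [MonoidHom.comp_apply, MulEquiv.coe_toMonoidHom, MulAut.conj_apply,
        negAction_ofAdd_one_apply, involutionHom_ofAdd_one, zpowPairHom_apply]
      calc u ^ n⁻¹.toAdd.1 * w ^ n⁻¹.toAdd.2
          = (x * u * x⁻¹) ^ n.toAdd.1 * (x * w * x⁻¹) ^ n.toAdd.2 := by simp [hu, hw]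
        _ = x * (u ^ n.toAdd.1 * w ^ n.toAdd.2) * x⁻¹ := by simp only [conj_zpow]; group

variable (x u w : H) (hx : x * x = 1) (huw : Commute u w)
  (hu : x * u * x⁻¹ = u⁻¹) (hw : x * w * x⁻¹ = w⁻¹)

theorem lift_inl (n : Multiplicative (ℤ × ℤ)) :
    lift x u w hx huw hu hw (inl n) = zpowPairHom u w huw n :=
  SemidirectProduct.lift_inl _ _ _ n

theorem lift_inr_ofAdd_one : lift x u w hx huw hu hw (inr τ) = x :=
  (SemidirectProduct.lift_inr _ _ _ τ).trans (involutionHom_ofAdd_one x hx)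

theorem lift_mk_ofAdd_one (n : Multiplicative (ℤ × ℤ)) :
    lift x u w hx huw hu hw ⟨n, τ⟩ = zpowPairHom u w huw n * x := by
  rw [mk_eq_inl_mul_inr, _root_.map_mul, lift_inl, lift_inr_ofAdd_one]

end Lift

end NegSemidirect

namespace P6G

local notation "a" => (PresentedGroup.of 0 : P6G)
local notation "b" => (PresentedGroup.of 1 : P6G)
local notation "c" => (PresentedGroup.of 2 : P6G)

theorem of_mul_self (i : Fin 3) : (PresentedGroup.of i : P6G) * PresentedGroup.of i = 1 := by
  rw [← sq]
  fin_cases i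
  exacts [PresentedGroup.one_of_mem (.inl rfl), PresentedGroup.one_of_mem (.inr (.inl rfl)),
    PresentedGroup.one_of_mem (.inr (.inr (.inl rfl)))]

theorem inv_of (i : Fin 3) : (PresentedGroup.of i : P6G)⁻¹ = PresentedGroup.of i :=
  inv_eq_of_mul_eq_one_right (of_mul_self i)

theorem abc_eq_cba : a * b * c = c * b * a := by
  have habc : (a * b * c) * (a * b * c) = 1 :=
    PresentedGroup.one_of_mem (.inr (.inr (.inr rfl)))
  calc a * b * c = (a * b * c)⁻¹ := (inv_eq_of_mul_eq_one_right habc).symm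
    _ = c * b * a := by simp only [mul_inv_rev, inv_of, mul_assoc]

theorem bca_eq_acb : b * c * a = a * c * b :=
  calc b * c * a = a * (a * b * c) * a := by simp only [← mul_assoc, of_mul_self, one_mul]
    _ = a * (c * b * a) * a := by rw [abc_eq_cba]
    _ = a * c * b := by simp only [mul_assoc, of_mul_self, mul_one]

theorem commute_ab_bc : Commute (a * b) (b * c) :=
  calc a * b * (b * c) = a * c := by simp only [mul_assoc, ← mul_assoc b, of_mul_self, one_mul]
    _ = b * c * a * b := by rw [bca_eq_acb, mul_assoc, of_mul_self, mul_one]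
    _ = b * c * (a * b) := mul_assoc _ _ _

theorem conj_ab : a * (a * b) * a⁻¹ = (a * b)⁻¹ := by
  simp only [mul_inv_rev, inv_of, ← mul_assoc, of_mul_self, one_mul]

theorem conj_bc : a * (b * c) * a⁻¹ = (b * c)⁻¹ := by
  simp only [mul_inv_rev, inv_of, ← mul_assoc, abc_eq_cba]
  simp only [mul_assoc, of_mul_self, mul_one]

def genImage : Fin 3 → NegSemidirect :=
  ![⟨1, τ⟩, ⟨.ofAdd (-1, 0), τ⟩, ⟨.ofAdd (-1, -1), τ⟩]

theorem genImage_respects_rels : ∀ r ∈ P6rels, FreeGroup.lift genImage r = 1 := by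
  have habc : genImage 0 * genImage 1 * genImage 2 = ⟨.ofAdd (0, -1), τ⟩ := by
    ext <;> decide
  rintro r (rfl | rfl | rfl | rfl) <;>
    simp only [_root_.map_mul, FreeGroup.lift_apply_of, sq, habc] <;>
    exact NegSemidirect.mk_ofAdd_one_mul_self _

def toSemidirect : P6G →* NegSemidirect := PresentedGroup.toGroup genImage_respects_rels

def ofSemidirect : NegSemidirect →* P6G :=
  NegSemidirect.lift a (a * b) (b * c) (of_mul_self 0) commute_ab_bc conj_ab conj_bc

theorem toSemidirect_ab : toSemidirect (a * b) = inl (.ofAdd (1, 0)) := by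
  rw [_root_.map_mul, toSemidirect, PresentedGroup.toGroup.of, PresentedGroup.toGroup.of]
  ext <;> decide

theorem toSemidirect_bc : toSemidirect (b * c) = inl (.ofAdd (0, 1)) := by
  rw [_root_.map_mul, toSemidirect, PresentedGroup.toGroup.of, PresentedGroup.toGroup.of]
  ext <;> decide

theorem ofSemidirect_comp_toSemidirect : ofSemidirect.comp toSemidirect = MonoidHom.id P6G := by
  refine PresentedGroup.ext fun i => ?_
  rw [MonoidHom.comp_apply, MonoidHom.id_apply, toSemidirect, PresentedGroup.toGroup.of]
  fin_cases i
  · show ofSemidirect ⟨1, τ⟩ = a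
    rw [ofSemidirect, NegSemidirect.lift_mk_ofAdd_one, NegSemidirect.zpowPairHom_apply]
    simp
  · show ofSemidirect ⟨.ofAdd (-1, 0), τ⟩ = b
    rw [ofSemidirect, NegSemidirect.lift_mk_ofAdd_one, NegSemidirect.zpowPairHom_apply]
    simp [mul_assoc, inv_of, of_mul_self]
  · show ofSemidirect ⟨.ofAdd (-1, -1), τ⟩ = c
    rw [ofSemidirect, NegSemidirect.lift_mk_ofAdd_one, NegSemidirect.zpowPairHom_apply]
    simp only [toAdd_ofAdd, zpow_neg, zpow_one, mul_inv_rev, inv_of, mul_assoc]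
    rw [← mul_assoc c, ← abc_eq_cba, ← mul_assoc a, ← mul_assoc a, of_mul_self, one_mul,
      ← mul_assoc, of_mul_self, one_mul]

theorem toSemidirect_comp_ofSemidirect :
    toSemidirect.comp ofSemidirect = MonoidHom.id NegSemidirect := by
  refine SemidirectProduct.hom_ext (MonoidHom.ext fun n => ?_) (MonoidHom.ext fun z => ?_)
  · rw [MonoidHom.comp_apply, MonoidHom.comp_apply, ofSemidirect, NegSemidirect.lift_inl,
      NegSemidirect.zpowPairHom_apply, _root_.map_mul, map_zpow, map_zpow, toSemidirect_ab,
      toSemidirect_bc]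
    simp only [← map_zpow (inl : Multiplicative (ℤ × ℤ) →* NegSemidirect),
      ← _root_.map_mul (inl : Multiplicative (ℤ × ℤ) →* NegSemidirect)]
    congr 1
    ext <;> simp
  · simp only [MonoidHom.comp_apply, MonoidHom.id_apply]
    rcases Multiplicative.zmod_two_eq_one_or z with rfl | rfl
    · simp
    · rw [ofSemidirect, NegSemidirect.lift_inr_ofAdd_one, toSemidirect,
        PresentedGroup.toGroup.of]
      rfl

def mulEquivSemidirect : P6G ≃* NegSemidirect :=
  toSemidirect.toMulEquiv ofSemidirect ofSemidirect_comp_toSemidirect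
    toSemidirect_comp_ofSemidirect

theorem parity_eq_rightHom_comp : parity = rightHom.comp toSemidirect :=
  PresentedGroup.ext fun i => by fin_cases i <;> rfl

theorem parity_surjective : Function.Surjective parity := by
  rw [parity_eq_rightHom_comp]
  exact rightHom_surjective.comp mulEquivSemidirect.surjective

theorem ker_parity_eq_comap : parity.ker = inl.range.comap toSemidirect := by
  rw [parity_eq_rightHom_comp, ← MonoidHom.comap_ker, range_inl_eq_ker_rightHom]

theorem ker_parity_eq_closure : parity.ker = Subgroup.closure {a * b, b * c} := by
  refine le_antisymm (fun g hg => ?_) ((Subgroup.closure_le _).2 ?_)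
  · obtain ⟨n, hn⟩ : toSemidirect g ∈ inl.range := by rwa [ker_parity_eq_comap] at hg
    have hg : ofSemidirect (inl n) = g := by
      rw [hn]; exact DFunLike.congr_fun ofSemidirect_comp_toSemidirect g
    rw [← hg, ofSemidirect, NegSemidirect.lift_inl]
    exact NegSemidirect.zpowPairHom_mem_closure _ _ _ _
  · rintro g (rfl | rfl) <;>
      simp [parity_eq_rightHom_comp, toSemidirect_ab, toSemidirect_bc]

theorem map_ker_parity :
    parity.ker.map (mulEquivSemidirect : P6G →* NegSemidirect) = inl.range := by
  rw [ker_parity_eq_comap]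
  exact Subgroup.map_comap_eq_self_of_surjective mulEquivSemidirect.surjective _

noncomputable def kerParityEquiv : parity.ker ≃* Multiplicative (ℤ × ℤ) :=
  ((mulEquivSemidirect.subgroupMap parity.ker).trans (MulEquiv.subgroupCongr map_ker_parity)).trans
    (MonoidHom.ofInjective inl_injective).symm

end P6G

/-- `G = ⟨a, b, c ∣ a² = b² = c² = (abc)² = 1⟩` has a normal subgroup isomorphic to
`ℤ²` (generated by the commuting elements `ab` and `bc`) with quotient `ℤ/2ℤ`, and `G`
is isomorphic to the semidirect product `ℤ² ⋊ ℤ/2ℤ` with `ℤ/2ℤ` acting by negation. -/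
theorem P6G_iso_semidirect :
    (PresentedGroup.of 0 * PresentedGroup.of 1 : P6G) *
          (PresentedGroup.of 1 * PresentedGroup.of 2) =
        (PresentedGroup.of 1 * PresentedGroup.of 2) *
          (PresentedGroup.of 0 * PresentedGroup.of 1) ∧
    ∃ (N : Subgroup P6G) (hN : N.Normal),
      N = Subgroup.closure {PresentedGroup.of 0 * PresentedGroup.of 1,
            PresentedGroup.of 1 * PresentedGroup.of 2} ∧
      Nonempty (N ≃* Multiplicative (ℤ × ℤ)) ∧
      Nonempty (letI := hN; ((P6G ⧸ N) ≃* Multiplicative (ZMod 2))) ∧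
      Nonempty (P6G ≃* SemidirectProduct (Multiplicative (ℤ × ℤ))
        (Multiplicative (ZMod 2)) negAction) :=
  ⟨P6G.commute_ab_bc, parity.ker, inferInstance, P6G.ker_parity_eq_closure,
    ⟨P6G.kerParityEquiv⟩,
    ⟨QuotientGroup.quotientKerEquivOfSurjective parity P6G.parity_surjective⟩,
    ⟨P6G.mulEquivSemidirect⟩⟩
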